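/- arXiv:2010.05840 — 2 statements merged into one kernel-verified Lean document; each statement's English description precedes it below -/
import Mathlib

section
/- Let (P, μ) be a nonzero finite measure space and T : P → P an ergodic measure-preserving transformation. For each n ∈ ℕ let R_n : P → ℝ be measurable, and set Q_n = R_n ∘ T − R_n. Assume Q_n converges to zero in probability with respect to μ, i.e. for every ε > 0, μ{x ∈ P : |Q_n(x)| ≥ ε} → 0 as n → ∞. Let ψ be a Borel probability measure on ℝ. If there exists a probability measure ν₀ on P absolutely continuous with respect to μ such that the pushforward measures (ν₀).map(R_n) converge weakly to ψ, then for every probability measure ν on P absolutely continuous with respect to μ, the pushforwards ν.map(R_n) converge weakly to ψ. -/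
/-!
Fix a bounded Lipschitz `f` and put `φₙ = f ∘ Rₙ`. Since `f` is Lipschitz, `φₙ ∘ T - φₙ → 0` in
measure, hence in `L²(μ)` because the `φₙ` are uniformly bounded: the `φₙ` are asymptotically
invariant under the Koopman isometry `U h = h ∘ T`. For an isometry `U`, the range of `U - 1` is
dense in the orthogonal complement of the fixed vectors, and `⟪φₙ, U h - h⟫ = -⟪U φₙ - φₙ, U h⟫`
tends to `0`. Hence `∫ φₙ g dμ → 0` for every `g ∈ L²` orthogonal to the fixed vectors, which by
ergodicity are the constants, and then by density for every mean-zero `g ∈ L¹`. The choice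
`g = dν/dμ - dν₀/dμ` gives `∫ φₙ dν - ∫ φₙ dν₀ → 0`, and bounded Lipschitz test functions
determine weak convergence.
-/

open MeasureTheory Filter Topology BoundedContinuousFunction
open scoped NNReal ENNReal InnerProductSpace

section Isometry

variable {E : Type*} [NormedAddCommGroup E] [InnerProductSpace ℝ E]

theorem LinearIsometry.orthogonal_range_sub_one_le_ker (U : E →ₗᵢ[ℝ] E) :
    (LinearMap.range (U.toLinearMap - 1))ᗮ ≤ LinearMap.ker (U.toLinearMap - 1) := by
  intro x hx
  have hinner : ∀ y, ⟪U y, x⟫_ℝ = ⟪y, x⟫_ℝ := by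
    simpa [Submodule.mem_orthogonal, inner_sub_left, sub_eq_zero] using hx
  have : U x = x :=
    eq_of_norm_le_re_inner_eq_norm_sq (𝕜 := ℝ) (U.norm_map x).le (by simp [hinner])
  simp [this]

variable [CompleteSpace E]

theorem LinearIsometry.tendsto_inner_of_tendsto_map_sub (U : E →ₗᵢ[ℝ] E) {u : ℕ → E} {C : ℝ}
    (hu : ∀ n, ‖u n‖ ≤ C) (hUu : Tendsto (fun n => U (u n) - u n) atTop (𝓝 0)) {w : E}
    (hw : w ∈ (LinearMap.ker (U.toLinearMap - 1))ᗮ) :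
    Tendsto (fun n => ⟪u n, w⟫_ℝ) atTop (𝓝 0) := by
  have hclosed : IsClosed {w | Tendsto (fun n => ⟪u n, w⟫_ℝ) atTop (𝓝 0)} := by
    refine Equicontinuous.isClosed_setOfPred_tendsto (f := fun _ => (0 : ℝ)) ?_ continuous_const
    refine (LipschitzWith.uniformEquicontinuous _ C.toNNReal fun n => ?_).equicontinuous
    refine (innerSL ℝ (u n)).lipschitz.weaken ?_
    rw [← NNReal.coe_le_coe, coe_nnnorm, innerSL_apply_norm]
    exact (hu n).trans (Real.le_coe_toNNReal C)
  have hrange : Set.range (fun h => U h - h) ⊆ {w | Tendsto (fun n => ⟪u n, w⟫_ℝ) atTop (𝓝 0)} := by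
    rintro _ ⟨h, rfl⟩
    have hcoboundary : ∀ n, ⟪u n, U h - h⟫_ℝ = -⟪U (u n) - u n, U h⟫_ℝ := fun n => by
      simp [inner_sub_left, inner_sub_right, U.inner_map_map]
    simp only [Set.mem_ofPred_eq, hcoboundary]
    simpa using ((hUu.inner tendsto_const_nhds (𝕜 := ℝ) (g := fun _ => U h)).neg)
  have hw' : w ∈ closure (Set.range fun h => U h - h) := by
    have := Submodule.orthogonal_le (U.orthogonal_range_sub_one_le_ker) hw
    rw [Submodule.orthogonal_orthogonal_eq_closure, ← SetLike.mem_coe,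
      Submodule.topologicalClosure_coe] at this
    convert this using 2
    ext
    simp [eq_comm]
  exact closure_minimal hrange hclosed hw'

end Isometry

namespace MeasureTheory

section InMeasure

variable {ι α β : Type*} [MeasurableSpace α] {μ : Measure α} [NormedAddCommGroup β]

theorem unifIntegrable_of_forall_norm_le {p : ℝ≥0∞} (hp : 1 ≤ p) (hp' : p ≠ ∞) {f : ι → α → β}
    (hf : ∀ i, AEStronglyMeasurable (f i) μ) {C : ℝ} (hC : ∀ i x, ‖f i x‖ ≤ C) :
    UnifIntegrable f p μ := by
  refine unifIntegrable_of hp hp' hf fun ε hε => ⟨C.toNNReal + 1, fun i => ?_⟩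
  have hempty : {x | C.toNNReal + 1 ≤ ‖f i x‖₊} = ∅ := by
    ext x
    simp only [Set.mem_ofPred_eq, Set.mem_empty_iff_false, iff_false, not_le]
    rw [← NNReal.coe_lt_coe, coe_nnnorm, NNReal.coe_add, NNReal.coe_one]
    linarith [hC i x, Real.le_coe_toNNReal C]
  simp [hempty]

theorem TendstoInMeasure.tendsto_eLpNorm_of_norm_le [IsFiniteMeasure μ] {p : ℝ≥0∞} (hp : 1 ≤ p)
    (hp' : p ≠ ∞) {f : ℕ → α → β} (hf : ∀ n, AEStronglyMeasurable (f n) μ) {C : ℝ}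
    (hC : ∀ n x, ‖f n x‖ ≤ C) (h : TendstoInMeasure μ f atTop 0) :
    Tendsto (fun n => eLpNorm (f n) p μ) atTop (𝓝 0) := by
  simpa using tendsto_Lp_finite_of_tendstoInMeasure hp hp' hf MemLp.zero
    (unifIntegrable_of_forall_norm_le hp hp' hf hC) h

theorem TendstoInMeasure.of_norm_le_mul {γ : Type*} [NormedAddCommGroup γ] {l : Filter ι}
    {f : ι → α → β} {g : ι → α → γ} (h : TendstoInMeasure μ f l 0) (K : ℝ≥0)
    (hle : ∀ i x, ‖g i x‖ ≤ K * ‖f i x‖) : TendstoInMeasure μ g l 0 := by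
  rw [tendstoInMeasure_iff_norm] at h ⊢
  intro ε hε
  have hK : (0 : ℝ) < K + 1 := by positivity
  refine tendsto_of_tendsto_of_tendsto_of_le_of_le tendsto_const_nhds
    (h (ε / (K + 1)) (div_pos hε hK)) (fun _ => zero_le) fun i => measure_mono fun x hx => ?_
  simp only [Set.mem_ofPred_eq, Pi.zero_apply, sub_zero] at hx ⊢
  rw [div_le_iff₀ hK]
  nlinarith [hle i x, norm_nonneg (f i x)]

end InMeasure

section Approximation

variable {P : Type*} [MeasurableSpace P] {μ : Measure P}

theorem tendsto_integral_mul_of_forall_integral_abs_sub_lt {φ : ℕ → P → ℝ}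
    (hφm : ∀ n, AEStronglyMeasurable (φ n) μ) {C : ℝ} (hφC : ∀ n x, |φ n x| ≤ C) {g : P → ℝ}
    (hg : Integrable g μ)
    (happrox : ∀ ε > 0, ∃ g', Integrable g' μ ∧ ∫ x, |g x - g' x| ∂μ < ε ∧
      Tendsto (fun n => ∫ x, φ n x * g' x ∂μ) atTop (𝓝 0)) :
    Tendsto (fun n => ∫ x, φ n x * g x ∂μ) atTop (𝓝 0) := by
  rw [Metric.tendsto_atTop]
  intro ε hε
  obtain ⟨g', hg', hclose, hlim⟩ := happrox (ε / 2 / (|C| + 1)) (by positivity)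
  obtain ⟨N, hN⟩ := Metric.tendsto_atTop.1 hlim (ε / 2) (by positivity)
  refine ⟨N, fun n hn => ?_⟩
  have hint : ∀ {h : P → ℝ}, Integrable h μ → Integrable (fun x => φ n x * h x) μ := fun hh =>
    hh.bdd_mul (hφm n) (ae_of_all _ (hφC n))
  have hdiff : |∫ x, φ n x * g x ∂μ - ∫ x, φ n x * g' x ∂μ| ≤ |C| * ∫ x, |g x - g' x| ∂μ := by
    rw [← integral_sub (hint hg) (hint hg'), ← integral_const_mul, ← Real.norm_eq_abs]
    refine norm_integral_le_of_norm_le ((hg.sub hg').abs.const_mul |C|) (ae_of_all _ fun x => ?_)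
    rw [Real.norm_eq_abs, ← mul_sub, abs_mul]
    exact mul_le_mul_of_nonneg_right ((hφC n x).trans (le_abs_self C)) (abs_nonneg _)
  have hsmall : |C| * ∫ x, |g x - g' x| ∂μ < ε / 2 := by
    have hclose' := (lt_div_iff₀ (by positivity)).1 hclose
    have hnonneg : 0 ≤ ∫ x, |g x - g' x| ∂μ := integral_nonneg fun x => abs_nonneg _
    nlinarith [abs_nonneg C]
  have hn' := hN n hn
  rw [Real.dist_eq, sub_zero] at hn' ⊢
  linarith [abs_sub_abs_le_abs_sub (∫ x, φ n x * g x ∂μ) (∫ x, φ n x * g' x ∂μ)]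

theorem Integrable.exists_memLp_integral_eq_zero_integral_abs_sub_lt [IsFiniteMeasure μ]
    {g : P → ℝ} (hg : Integrable g μ) (hg0 : ∫ x, g x ∂μ = 0) (p : ℝ≥0∞) {ε : ℝ} (hε : 0 < ε) :
    ∃ g', MemLp g' p μ ∧ ∫ x, g' x ∂μ = 0 ∧ ∫ x, |g x - g' x| ∂μ < ε := by
  obtain ⟨s, hs, hs1⟩ := (memLp_one_iff_integrable.2 hg).exists_simpleFunc_eLpNorm_sub_lt
    ENNReal.one_ne_top (ENNReal.ofReal_pos.2 (half_pos hε)).ne'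
  have hsi : Integrable s μ := memLp_one_iff_integrable.1 hs1
  have hgs : Integrable (fun x => |g x - s x|) μ := (hg.sub hsi).abs
  have hclose : ∫ x, |g x - s x| ∂μ < ε / 2 := by
    have hL1 : ∫ x, |g x - s x| ∂μ = (eLpNorm (g - ⇑s) 1 μ).toReal := by
      simp only [← Real.norm_eq_abs, eLpNorm_one_eq_lintegral_enorm, Pi.sub_apply]
      exact integral_norm_eq_lintegral_enorm (hg.sub hsi).1
    rw [hL1]
    exact ENNReal.toReal_lt_of_lt_ofReal hs
  refine ⟨fun x => s x - ⨍ y, s y ∂μ, (s.memLp_of_isFiniteMeasure p μ).sub (memLp_const _),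
    integral_sub_average μ s, ?_⟩
  have hmean : μ.real Set.univ * |⨍ y, s y ∂μ| ≤ ∫ x, |g x - s x| ∂μ :=
    calc μ.real Set.univ * |⨍ y, s y ∂μ| = |∫ x, s x ∂μ| := by
          rw [← measure_smul_average, smul_eq_mul, abs_mul, abs_of_nonneg measureReal_nonneg]
      _ = |∫ x, (g x - s x) ∂μ| := by rw [integral_sub hg hsi, hg0, zero_sub, abs_neg]
      _ ≤ ∫ x, |g x - s x| ∂μ := abs_integral_le_integral_abs
  calc ∫ x, |g x - (s x - ⨍ y, s y ∂μ)| ∂μ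
      ≤ ∫ x, (|g x - s x| + |⨍ y, s y ∂μ|) ∂μ := by
        refine integral_mono (hg.sub (hsi.sub (integrable_const _))).abs
          (hgs.add (integrable_const _)) fun x => ?_
        simpa [sub_sub_eq_add_sub, add_sub_right_comm] using abs_add_le (g x - s x) (⨍ y, s y ∂μ)
    _ = ∫ x, |g x - s x| ∂μ + μ.real Set.univ * |⨍ y, s y ∂μ| := by
        rw [integral_add hgs (integrable_const _), integral_const, smul_eq_mul]
    _ < ε := by linarith

end Approximation

end MeasureTheory

namespace Ergodic

variable {P : Type*} [MeasurableSpace P] {μ : Measure P} {T : P → P} {φ : ℕ → P → ℝ} {C : ℝ}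

theorem exists_ae_eq_const_of_compMeasurePreserving_eq (hT : Ergodic T μ) {p : ℝ≥0∞}
    {y : Lp ℝ p μ} (hy : Lp.compMeasurePreserving T hT.toMeasurePreserving y = y) :
    ∃ c, y =ᵐ[μ] Function.const P c := by
  refine hT.ae_eq_const_of_ae_eq_comp₀ (Lp.aestronglyMeasurable y).aemeasurable.nullMeasurable ?_
  have := Lp.coeFn_compMeasurePreserving y hT.toMeasurePreserving
  rw [hy] at this
  exact this.symm

theorem toLp_mem_orthogonal_ker_compMeasurePreserving_sub_one (hT : Ergodic T μ) {g : P → ℝ}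
    (hg : MemLp g 2 μ) (hg0 : ∫ x, g x ∂μ = 0) :
    hg.toLp g ∈ (LinearMap.ker
      ((Lp.compMeasurePreservingₗᵢ ℝ T hT.toMeasurePreserving).toLinearMap - 1))ᗮ := by
  rw [Submodule.mem_orthogonal]
  intro y hy
  simp only [LinearMap.mem_ker, LinearMap.sub_apply, sub_eq_zero] at hy
  obtain ⟨c, hc⟩ := hT.exists_ae_eq_const_of_compMeasurePreserving_eq hy
  calc ⟪y, hg.toLp g⟫_ℝ = ∫ x, g x * c ∂μ := by
        rw [L2.inner_def]
        refine integral_congr_ae ?_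
        filter_upwards [hc, hg.coeFn_toLp] with x h1 h2
        simp [h1, h2]
    _ = 0 := by rw [integral_mul_const, hg0, zero_mul]

theorem tendsto_integral_mul_of_memLp_two (hT : Ergodic T μ) [IsFiniteMeasure μ]
    (hφm : ∀ n, AEStronglyMeasurable (φ n) μ) (hφC : ∀ n x, |φ n x| ≤ C)
    (hφT : TendstoInMeasure μ (fun n x => φ n (T x) - φ n x) atTop 0)
    {g : P → ℝ} (hg : MemLp g 2 μ) (hg0 : ∫ x, g x ∂μ = 0) :
    Tendsto (fun n => ∫ x, φ n x * g x ∂μ) atTop (𝓝 0) := by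
  have hTmp := hT.toMeasurePreserving
  have hφ2 : ∀ n, MemLp (φ n) 2 μ := fun n => MemLp.of_bound (hφm n) C (ae_of_all _ (hφC n))
  set U := Lp.compMeasurePreservingₗᵢ ℝ T hTmp (E := ℝ) (p := 2)
  have hbound : ∀ n, ‖(hφ2 n).toLp‖ ≤ measureUnivNNReal μ ^ (2 : ℝ≥0∞).toReal⁻¹ * max C 0 :=
    fun n => Lp.norm_le_of_ae_bound (le_max_right _ _) <| by
      filter_upwards [(hφ2 n).coeFn_toLp] with x hx
      rw [hx, Real.norm_eq_abs]
      exact (hφC n x).trans (le_max_left _ _)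
  have hinvariant : Tendsto (fun n => U (hφ2 n).toLp - (hφ2 n).toLp) atTop (𝓝 0) := by
    have hdiff : ∀ n, U (hφ2 n).toLp - (hφ2 n).toLp
        = (((hφ2 n).comp_measurePreserving hTmp).sub (hφ2 n)).toLp _ := fun n =>
      (MemLp.toLp_sub ((hφ2 n).comp_measurePreserving hTmp) (hφ2 n)).symm
    have hL2 := hφT.tendsto_eLpNorm_of_norm_le (f := fun n x => φ n (T x) - φ n x) one_le_two
      ENNReal.ofNat_ne_top (fun n => ((hφm n).comp_measurePreserving hTmp).sub (hφm n))
      (C := 2 * C) fun n x => by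
        rw [Real.norm_eq_abs]
        linarith [abs_sub (φ n (T x)) (φ n x), hφC n (T x), hφC n x]
    rw [tendsto_zero_iff_norm_tendsto_zero]
    simp only [hdiff, Lp.norm_toLp]
    exact (ENNReal.tendsto_toReal ENNReal.zero_ne_top).comp hL2
  refine (U.tendsto_inner_of_tendsto_map_sub hbound hinvariant
    (hT.toLp_mem_orthogonal_ker_compMeasurePreserving_sub_one hg hg0)).congr fun n => ?_
  rw [L2.inner_def]
  refine integral_congr_ae ?_
  filter_upwards [(hφ2 n).coeFn_toLp, hg.coeFn_toLp] with x h1 h2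
  simp [h1, h2, mul_comm]

theorem tendsto_integral_mul_of_integral_eq_zero (hT : Ergodic T μ) [IsFiniteMeasure μ]
    (hφm : ∀ n, AEStronglyMeasurable (φ n) μ) (hφC : ∀ n x, |φ n x| ≤ C)
    (hφT : TendstoInMeasure μ (fun n x => φ n (T x) - φ n x) atTop 0)
    {g : P → ℝ} (hg : Integrable g μ) (hg0 : ∫ x, g x ∂μ = 0) :
    Tendsto (fun n => ∫ x, φ n x * g x ∂μ) atTop (𝓝 0) := by
  refine tendsto_integral_mul_of_forall_integral_abs_sub_lt hφm hφC hg fun ε hε => ?_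
  obtain ⟨g', hg'2, hg'0, hclose⟩ := hg.exists_memLp_integral_eq_zero_integral_abs_sub_lt hg0 2 hε
  exact ⟨g', hg'2.integrable one_le_two, hclose,
    hT.tendsto_integral_mul_of_memLp_two hφm hφC hφT hg'2 hg'0⟩

theorem tendsto_integral_sub_integral_of_absolutelyContinuous (hT : Ergodic T μ) [IsFiniteMeasure μ]
    (hφm : ∀ n, AEStronglyMeasurable (φ n) μ) (hφC : ∀ n x, |φ n x| ≤ C)
    (hφT : TendstoInMeasure μ (fun n x => φ n (T x) - φ n x) atTop 0)
    {ν ν' : Measure P} [IsFiniteMeasure ν] [IsFiniteMeasure ν'] (hν : ν ≪ μ) (hν' : ν' ≪ μ)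
    (hmass : ν Set.univ = ν' Set.univ) :
    Tendsto (fun n => ∫ x, φ n x ∂ν - ∫ x, φ n x ∂ν') atTop (𝓝 0) := by
  set g : P → ℝ := fun x => (ν.rnDeriv μ x).toReal - (ν'.rnDeriv μ x).toReal
  have hg : Integrable g μ :=
    Measure.integrable_toReal_rnDeriv.sub Measure.integrable_toReal_rnDeriv
  have hg0 : ∫ x, g x ∂μ = 0 := by
    rw [integral_sub Measure.integrable_toReal_rnDeriv Measure.integrable_toReal_rnDeriv,
      Measure.integral_toReal_rnDeriv hν, Measure.integral_toReal_rnDeriv hν', measureReal_def,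
      measureReal_def, hmass, sub_self]
  have hint : ∀ {ρ : Measure P} [IsFiniteMeasure ρ], ρ ≪ μ → ∀ n,
      Integrable (fun x => (ρ.rnDeriv μ x).toReal * φ n x) μ := fun hρ n =>
    (integrable_toReal_rnDeriv_mul_iff hρ).2 <|
      Integrable.of_bound ((hφm n).mono_ac hρ) C (ae_of_all _ (hφC n))
  refine (hT.tendsto_integral_mul_of_integral_eq_zero hφm hφC hφT hg hg0).congr fun n => ?_
  rw [← integral_toReal_rnDeriv_mul hν, ← integral_toReal_rnDeriv_mul hν',
    ← integral_sub (hint hν n) (hint hν' n)]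
  exact integral_congr_ae (ae_of_all _ fun x => by ring)

theorem tendsto_integral_comp_sub_integral_comp_of_lipschitzWith (hT : Ergodic T μ)
    [IsFiniteMeasure μ] {E : Type*} [NormedAddCommGroup E] [MeasurableSpace E]
    [OpensMeasurableSpace E] {R : ℕ → P → E} (hR : ∀ n, Measurable (R n))
    (hRT : TendstoInMeasure μ (fun n x => R n (T x) - R n x) atTop 0)
    (f : E →ᵇ ℝ) {K : ℝ≥0} (hf : LipschitzWith K f)
    {ν ν' : Measure P} [IsFiniteMeasure ν] [IsFiniteMeasure ν'] (hν : ν ≪ μ) (hν' : ν' ≪ μ)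
    (hmass : ν Set.univ = ν' Set.univ) :
    Tendsto (fun n => ∫ x, f (R n x) ∂ν - ∫ x, f (R n x) ∂ν') atTop (𝓝 0) :=
  hT.tendsto_integral_sub_integral_of_absolutelyContinuous
    (fun n => (f.continuous.measurable.comp (hR n)).aestronglyMeasurable)
    (fun n x => f.norm_coe_le_norm _)
    (hRT.of_norm_le_mul K fun n x => by
      simpa [dist_eq_norm] using hf.dist_le_mul (R n (T x)) (R n x))
    hν hν' hmass

end Ergodic

theorem strong_distributional_convergence_general
    {P : Type*} [MeasurableSpace P] (μ : Measure P) [IsFiniteMeasure μ]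
    (T : P → P) (hT : Ergodic T μ)
    (R : ℕ → P → ℝ) (hRmeas : ∀ n, Measurable (R n))
    (hQ : ∀ ε : ℝ, 0 < ε →
      Tendsto (fun n => μ {x | ε ≤ |R n (T x) - R n x|}) atTop (𝓝 0))
    (ψ : Measure ℝ) [IsProbabilityMeasure ψ]
    (ν₀ : Measure P) [IsProbabilityMeasure ν₀] (hν₀ : ν₀ ≪ μ)
    (hconv₀ : ∀ f : ℝ →ᵇ ℝ,
      Tendsto (fun n => ∫ x, f (R n x) ∂ν₀) atTop (𝓝 (∫ y, f y ∂ψ)))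
    (ν : Measure P) [IsProbabilityMeasure ν] (hν : ν ≪ μ) :
    ∀ f : ℝ →ᵇ ℝ,
      Tendsto (fun n => ∫ x, f (R n x) ∂ν) atTop (𝓝 (∫ y, f y ∂ψ)) := by
  have hRT : TendstoInMeasure μ (fun n x => R n (T x) - R n x) atTop 0 := by
    rw [tendstoInMeasure_iff_norm]
    simpa using hQ
  let νR : ℕ → ProbabilityMeasure ℝ := fun n =>
    ⟨ν.map (R n), Measure.isProbabilityMeasure_map (hRmeas n).aemeasurable⟩
  have hweak : Tendsto νR atTop (𝓝 ⟨ψ, ‹_›⟩) := by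
    refine tendsto_iff_forall_lipschitz_integral_tendsto.2 fun f ⟨C, hC⟩ ⟨K, hK⟩ => ?_
    let F : ℝ →ᵇ ℝ := .mkOfBound ⟨f, hK.continuous⟩ C hC
    have hdiff := hT.tendsto_integral_comp_sub_integral_comp_of_lipschitzWith hRmeas hRT F hK
      hν hν₀ (by simp)
    simpa [νR, F, integral_map (hRmeas _).aemeasurable hK.continuous.aestronglyMeasurable]
      using (hconv₀ F).add hdiff
  intro f
  simpa [νR, integral_map (hRmeas _).aemeasurable f.continuous.aestronglyMeasurable]
    using ProbabilityMeasure.tendsto_iff_forall_integral_tendsto.1 hweak f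

/-- Strong distributional convergence (paper's Theorem 9.8, for finite measure spaces):
if `T` is an ergodic measure-preserving transformation of a nonzero finite measure space
`(P, μ)`, the differences `Q_n = R_n ∘ T - R_n` converge to zero in probability, and for
*some* probability measure `ν₀ ≪ μ` the pushforwards `(ν₀).map (R n)` converge weakly to
the probability measure `ψ` on `ℝ`, then the same weak convergence holds for *every*
probability measure `ν ≪ μ`.  Weak convergence is expressed by integrating against
bounded continuous functions. -/
theorem strong_distributional_convergence
    {P : Type*} [MeasurableSpace P] (μ : Measure P) [IsFiniteMeasure μ] (hμ : μ ≠ 0)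
    (T : P → P) (hT : Ergodic T μ)
    (R : ℕ → P → ℝ) (hRmeas : ∀ n, Measurable (R n))
    (hQ : ∀ ε : ℝ, 0 < ε →
      Tendsto (fun n => μ {x | ε ≤ |R n (T x) - R n x|}) atTop (𝓝 0))
    (ψ : Measure ℝ) [IsProbabilityMeasure ψ]
    (ν₀ : Measure P) [IsProbabilityMeasure ν₀] (hν₀ : ν₀ ≪ μ)
    (hconv₀ : ∀ f : ℝ →ᵇ ℝ,
      Tendsto (fun n => ∫ x, f (R n x) ∂ν₀) atTop (𝓝 (∫ y, f y ∂ψ)))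
    (ν : Measure P) [IsProbabilityMeasure ν] (hν : ν ≪ μ) :
    ∀ f : ℝ →ᵇ ℝ,
      Tendsto (fun n => ∫ x, f (R n x) ∂ν) atTop (𝓝 (∫ y, f y ∂ψ)) :=
  strong_distributional_convergence_general μ T hT R hRmeas hQ ψ ν₀ hν₀ hconv₀ ν hν
end

section
/- Let U be a bounded open subset of the Euclidean plane ℝ². Suppose there exist finitely many continuously differentiable curves γ₁, …, γ_N : [0,1] → ℝ² whose images cover the topological frontier ∂U of U. Then there exists a constant C > 0 such that for every ε with 0 < ε ≤ 1, the Lebesgue measure of the open ε-thickening {x ∈ ℝ² : dist(x, ∂U) < ε} of ∂U is at most C ε. -/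
/-!
A Lipschitz curve `f : [0,1] → E` is traced, up to error `L/n`, by the `n + 1` points
`f (k/n)`, so the `ε`-thickening of its image is covered by `n + 1` balls of radius `ε + L/n`.
Taking `n = ⌈1/ε⌉` gives `O(1/ε)` balls of radius `O(ε)`, hence measure `O(ε^(d-1))` in
dimension `d`. In the plane this is `O(ε)`, and `C¹` curves on `[0,1]` are Lipschitz.
-/

open MeasureTheory Metric Set Module

theorem ContDiffOn.exists_lipschitzOnWith_of_isCompact_of_convex {E F : Type*}
    [NormedAddCommGroup E] [NormedSpace ℝ E] [NormedAddCommGroup F] [NormedSpace ℝ F]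
    {f : E → F} {s : Set E} (hf : ContDiffOn ℝ 1 f s) (hs : UniqueDiffOn ℝ s)
    (hsc : IsCompact s) (hsv : Convex ℝ s) : ∃ L, LipschitzOnWith L f s := by
  obtain ⟨M, hM⟩ := hsc.exists_bound_of_continuousOn (hf.continuousOn_fderivWithin hs le_rfl)
  refine ⟨M.toNNReal, hsv.lipschitzOnWith_of_nnnorm_fderivWithin_le
    (hf.differentiableOn one_ne_zero) fun x hx => ?_⟩
  rw [← norm_toNNReal]
  exact Real.toNNReal_mono (hM x hx)

theorem exists_abs_sub_natCast_div_le {n : ℕ} (hn : 0 < n) {t : ℝ}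
    (ht : t ∈ Icc (0 : ℝ) 1) :
    ∃ k ≤ n, |t - k / n| ≤ 1 / n := by
  have hn' : (0 : ℝ) < n := Nat.cast_pos.2 hn
  have htn : 0 ≤ t * n := mul_nonneg ht.1 hn'.le
  refine ⟨⌊t * n⌋₊, ?_, ?_⟩
  · exact Nat.floor_le_of_le (by nlinarith [ht.2])
  · rw [abs_of_nonneg, sub_le_iff_le_add, ← add_div, le_div_iff₀ hn']
    · linarith [Nat.lt_floor_add_one (t * n)]
    · rw [sub_nonneg, div_le_iff₀ hn']
      exact Nat.floor_le htn

theorem LipschitzOnWith.thickening_image_Icc_subset {α : Type*} [PseudoMetricSpace α]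
    {f : ℝ → α} {L : NNReal} (hf : LipschitzOnWith L f (Icc 0 1)) {n : ℕ} (hn : 0 < n)
    (δ : ℝ) :
    thickening δ (f '' Icc 0 1) ⊆
      ⋃ k ∈ Finset.range (n + 1), ball (f (k / n)) (δ + L / n) := by
  intro x hx
  obtain ⟨_, ⟨t, ht, rfl⟩, hxt⟩ := mem_thickening_iff.1 hx
  obtain ⟨k, hkn, hk⟩ := exists_abs_sub_natCast_div_le hn ht
  have hk01 : (k / n : ℝ) ∈ Icc (0 : ℝ) 1 :=
    ⟨by positivity, div_le_one_of_le₀ (by exact_mod_cast hkn) n.cast_nonneg⟩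
  refine mem_biUnion (Finset.mem_range_succ_iff.2 hkn) (mem_ball.2 ?_)
  calc dist x (f (k / n)) ≤ dist x (f t) + dist (f t) (f (k / n)) := dist_triangle _ _ _
    _ < δ + L * (1 / n) := by
      refine add_lt_add_of_lt_of_le hxt ((hf.dist_le_mul t ht _ hk01).trans ?_)
      rw [Real.dist_eq]
      gcongr
    _ = δ + L / n := by ring

theorem LipschitzOnWith.exists_addHaar_thickening_image_Icc_le {E : Type*}
    [NormedAddCommGroup E] [NormedSpace ℝ E] [FiniteDimensional ℝ E] [Nontrivial E]
    [MeasurableSpace E] [BorelSpace E] (μ : Measure E) [μ.IsAddHaarMeasure]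
    {f : ℝ → E} {L : NNReal} (hf : LipschitzOnWith L f (Icc 0 1)) :
    ∃ C : ℝ, 0 ≤ C ∧ ∀ ε : ℝ, 0 < ε → ε ≤ 1 →
      μ (thickening ε (f '' Icc 0 1)) ≤ ENNReal.ofReal (C * ε ^ (finrank ℝ E - 1)) := by
  set d := finrank ℝ E
  set V := (μ (ball (0 : E) 1)).toReal
  refine ⟨3 * (1 + L) ^ d * V, by positivity, fun ε hε hε1 => ?_⟩
  set n := ⌈1 / ε⌉₊
  have hn : 0 < n := Nat.ceil_pos.2 (by positivity)
  have hn' : (0 : ℝ) < n := Nat.cast_pos.2 hn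
  have hinv : 1 / (n : ℝ) ≤ ε := by
    rw [div_le_iff₀ hn', ← div_le_iff₀' hε]; exact Nat.le_ceil _
  have hcount : (n : ℝ) + 1 ≤ 3 / ε := by
    have := Nat.ceil_lt_add_one (one_div_pos.2 hε).le
    have : 1 ≤ 1 / ε := by rw [le_div_iff₀ hε]; linarith
    have : 3 / ε = 1 / ε + 2 * (1 / ε) := by ring
    linarith
  have hr : ε + L / n ≤ (1 + L) * ε := by
    have := mul_le_mul_of_nonneg_left hinv L.coe_nonneg
    rw [mul_one_div] at this; linarith
  have hball : ∀ x : E, μ (ball x (ε + L / n)) ≤ ENNReal.ofReal (((1 + L) * ε) ^ d * V) := by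
    intro x
    rw [ENNReal.ofReal_mul (by positivity), ENNReal.ofReal_toReal measure_ball_lt_top.ne,
      ← Measure.addHaar_ball_of_pos μ x (by positivity)]
    exact measure_mono (ball_subset_ball hr)
  calc μ (thickening ε (f '' Icc 0 1))
      ≤ μ (⋃ k ∈ Finset.range (n + 1), ball (f (k / n)) (ε + L / n)) :=
        measure_mono (hf.thickening_image_Icc_subset hn ε)
    _ ≤ ∑ k ∈ Finset.range (n + 1), μ (ball (f (k / n)) (ε + L / n)) :=
        measure_biUnion_finset_le _ _
    _ ≤ ∑ k ∈ Finset.range (n + 1), ENNReal.ofReal (((1 + L) * ε) ^ d * V) :=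
        Finset.sum_le_sum fun k _ => hball _
    _ = ENNReal.ofReal ((n + 1 : ℕ) * (((1 + L) * ε) ^ d * V)) := by
        rw [Finset.sum_const, Finset.card_range, nsmul_eq_mul,
          ENNReal.ofReal_mul (Nat.cast_nonneg _), ENNReal.ofReal_natCast]
    _ ≤ ENNReal.ofReal (3 * (1 + L) ^ d * V * ε ^ (d - 1)) := by
        apply ENNReal.ofReal_le_ofReal
        obtain ⟨m, hm⟩ : ∃ m, d = m + 1 := Nat.exists_eq_succ_of_ne_zero finrank_pos.ne'
        calc ((n + 1 : ℕ) : ℝ) * (((1 + L) * ε) ^ d * V)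
            ≤ 3 / ε * (((1 + L) * ε) ^ d * V) := by push_cast; gcongr
          _ = 3 * (1 + L) ^ d * V * ε ^ (d - 1) := by
              rw [hm, Nat.add_sub_cancel, mul_pow, pow_succ ε]
              field_simp

theorem frontier_thickening_area_bound_general
    (U : Set (EuclideanSpace ℝ (Fin 2)))
    (N : ℕ) (γ : Fin N → ℝ → EuclideanSpace ℝ (Fin 2))
    (hγ : ∀ i, ContDiffOn ℝ 1 (γ i) (Set.Icc 0 1))
    (hcover : frontier U ⊆ ⋃ i, γ i '' Set.Icc 0 1) :
    ∃ C : ℝ, 0 < C ∧ ∀ ε : ℝ, 0 < ε → ε ≤ 1 →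
      volume (Metric.thickening ε (frontier U)) ≤ ENNReal.ofReal (C * ε) := by
  choose L hL using fun i => (hγ i).exists_lipschitzOnWith_of_isCompact_of_convex
    (uniqueDiffOn_Icc one_pos) isCompact_Icc (convex_Icc 0 1)
  choose C hC0 hC using fun i => (hL i).exists_addHaar_thickening_image_Icc_le volume
  have hsum : 0 ≤ ∑ i, C i := Finset.sum_nonneg fun i _ => hC0 i
  refine ⟨∑ i, C i + 1, by linarith, fun ε hε hε1 => ?_⟩
  calc volume (thickening ε (frontier U))
      ≤ volume (⋃ i, thickening ε (γ i '' Icc 0 1)) := by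
        rw [← thickening_iUnion]
        exact measure_mono (thickening_subset_of_subset ε hcover)
    _ ≤ ∑ i, volume (thickening ε (γ i '' Icc 0 1)) := measure_iUnion_fintype_le _ _
    _ ≤ ∑ i, ENNReal.ofReal (C i * ε) := Finset.sum_le_sum fun i _ => by
        simpa [finrank_euclideanSpace_fin] using hC i ε hε hε1
    _ = ENNReal.ofReal ((∑ i, C i) * ε) := by
        rw [Finset.sum_mul, ENNReal.ofReal_sum_of_nonneg fun i _ => mul_nonneg (hC0 i) hε.le]
    _ ≤ ENNReal.ofReal ((∑ i, C i + 1) * ε) := ENNReal.ofReal_le_ofReal (by gcongr; linarith)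

/-- The geometric estimate in the proof of the paper's Theorem 9.29 (the square
pixel theorem): if `U` is a bounded open subset of the Euclidean plane whose
topological frontier is covered by finitely many continuously differentiable
curves `γ₁, …, γ_N : [0,1] → ℝ²`, then there is a constant `C > 0` such that for
all `0 < ε ≤ 1` the Lebesgue measure of the open `ε`-thickening of `∂U` is at
most `C ε`. -/
theorem frontier_thickening_area_bound
    (U : Set (EuclideanSpace ℝ (Fin 2)))
    (hUopen : IsOpen U) (hUbdd : Bornology.IsBounded U)
    (N : ℕ) (γ : Fin N → ℝ → EuclideanSpace ℝ (Fin 2))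
    (hγ : ∀ i, ContDiffOn ℝ 1 (γ i) (Set.Icc 0 1))
    (hcover : frontier U ⊆ ⋃ i, γ i '' Set.Icc 0 1) :
    ∃ C : ℝ, 0 < C ∧ ∀ ε : ℝ, 0 < ε → ε ≤ 1 →
      volume (Metric.thickening ε (frontier U)) ≤ ENNReal.ofReal (C * ε) :=
  frontier_thickening_area_bound_general U N γ hγ hcover
end
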